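/- Let n ≥ 2 and let f be a solution of the n×n Pulsar puzzle. Then for every row index j with 2 ≤ j ≤ n, the entry in the last column is exactly one more than the entry in the first column of the same row: f(j,n) = f(j,1) + 1. -/
import Mathlib

open scoped Classical


/-- The circled set `C n` of the `n × n` Pulsar puzzle, as a predicate on cells `(r, c)`
(1-indexed).  `C 1 = {(1,1)}`, and for `n ≥ 2`, a cell `(r,c)` of the grid is circled iff
`r = 1`, or `r ≥ 2`, `c ≥ 2` and `(n - c + 1, r - 1)` is circled in `C (n-1)`. -/
def Circled : ℕ → ℕ × ℕ → Prop
  | 0, _ => False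
  | 1, p => p = (1, 1)
  | (n + 2), (r, c) =>
      1 ≤ r ∧ r ≤ n + 2 ∧ 1 ≤ c ∧ c ≤ n + 2 ∧
        (r = 1 ∨ (2 ≤ r ∧ 2 ≤ c ∧ Circled (n + 1) (n + 2 - c + 1, r - 1)))

/-- `f` is a Latin square of order `n`: on the grid of cells `(r, c)` with `1 ≤ r, c ≤ n`
it takes values in `{1, …, n}`, with distinct values on distinct cells of any one row
and on distinct cells of any one column. -/
def IsLatinSquare (n : ℕ) (f : ℕ × ℕ → ℕ) : Prop :=
  (∀ r c, 1 ≤ r → r ≤ n → 1 ≤ c → c ≤ n → 1 ≤ f (r, c) ∧ f (r, c) ≤ n) ∧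
  (∀ r c₁ c₂, 1 ≤ r → r ≤ n → 1 ≤ c₁ → c₁ ≤ n → 1 ≤ c₂ → c₂ ≤ n → c₁ ≠ c₂ →
    f (r, c₁) ≠ f (r, c₂)) ∧
  (∀ r₁ r₂ c, 1 ≤ r₁ → r₁ ≤ n → 1 ≤ r₂ → r₂ ≤ n → 1 ≤ c → c ≤ n → r₁ ≠ r₂ →
    f (r₁, c) ≠ f (r₂, c))

/-- `f` is a solution of the `n × n` Pulsar puzzle: a Latin square of order `n` such that
each circled entry equals the number of circled cells carrying that same value. -/
def IsPulsarSolution (n : ℕ) (f : ℕ × ℕ → ℕ) : Prop :=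
  IsLatinSquare n f ∧
    ∀ p, Circled n p → f p = Set.ncard {q : ℕ × ℕ | Circled n q ∧ f q = f p}

lemma circled_succ {n r c : ℕ} : Circled (n+2) (r,c) ↔
    (1 ≤ r ∧ r ≤ n + 2 ∧ 1 ≤ c ∧ c ≤ n + 2 ∧
        (r = 1 ∨ (2 ≤ r ∧ 2 ≤ c ∧ Circled (n + 1) (n + 2 - c + 1, r - 1)))) := Iff.rfl

lemma circled_bounds : ∀ {n : ℕ} {p : ℕ × ℕ}, Circled n p → 1 ≤ p.1 ∧ p.1 ≤ n ∧ 1 ≤ p.2 ∧ p.2 ≤ n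
  | 0, p, h => absurd h not_false
  | 1, p, h => by simp [Circled] at h; simp [h]
  | (n+2), (r,c), h => by obtain ⟨h1,h2,h3,h4,_⟩ := h; exact ⟨h1,h2,h3,h4⟩

lemma circled_row1 {n c : ℕ} (hn : 1 ≤ n) : Circled n (1, c) ↔ 1 ≤ c ∧ c ≤ n := by
  match n, hn with
  | 1, _ => simp [Circled, Prod.ext_iff]; omega
  | (k+2), _ =>
    rw [circled_succ]
    constructor
    · rintro ⟨_,_,h3,h4,_⟩; exact ⟨h3,h4⟩
    · rintro ⟨h3,h4⟩; exact ⟨le_refl 1, by omega, h3, h4, Or.inl rfl⟩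

lemma circled_iff {n r c : ℕ} (hn : 2 ≤ n) (hr : 2 ≤ r) :
    Circled n (r, c) ↔ (r ≤ n ∧ 2 ≤ c ∧ c ≤ n ∧ Circled (n-1) (n - c + 1, r - 1)) := by
  obtain ⟨k, rfl⟩ : ∃ k, n = k + 2 := ⟨n - 2, by omega⟩
  rw [circled_succ]
  constructor
  · rintro ⟨_,h2,_,h4,(rfl|⟨_,hc,hC⟩)⟩
    · omega
    · exact ⟨h2, hc, h4, by simpa using hC⟩
  · rintro ⟨h2,hc,h4,hC⟩
    exact ⟨by omega, h2, by omega, h4, Or.inr ⟨hr, hc, by simpa using hC⟩⟩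

/-- the rotation sending cells of `C (n-1)` to non-top-row cells of `C n`. -/
def rot (n : ℕ) (p : ℕ × ℕ) : ℕ × ℕ := (p.2 + 1, n + 1 - p.1)

lemma rot_circled {n : ℕ} (hn : 2 ≤ n) {p : ℕ × ℕ} (hp : Circled (n-1) p) :
    Circled n (rot n p) := by
  obtain ⟨b1, b2, b3, b4⟩ := circled_bounds hp
  rw [rot, circled_iff hn (by omega)]
  refine ⟨by omega, by omega, by omega, ?_⟩
  have : n - (n + 1 - p.1) + 1 = p.1 := by omega
  have h2 : p.2 + 1 - 1 = p.2 := by omega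
  rw [this, h2]
  exact hp

lemma circled_eq_rot {n r c : ℕ} (hn : 2 ≤ n) (hr : 2 ≤ r) (h : Circled n (r, c)) :
    Circled (n-1) (n - c + 1, r - 1) ∧ (r, c) = rot n (n - c + 1, r - 1) := by
  rw [circled_iff hn hr] at h
  obtain ⟨h1, h2, h3, h4⟩ := h
  exact ⟨h4, by simp [rot, Prod.ext_iff]; omega⟩

lemma rot_injOn {n : ℕ} : Set.InjOn (rot n) {p | Circled (n-1) p} := by
  rintro ⟨a,b⟩ ha ⟨a',b'⟩ ha' h
  obtain ⟨x1,x2,x3,x4⟩ := circled_bounds ha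
  obtain ⟨y1,y2,y3,y4⟩ := circled_bounds ha'
  simp only [rot, Prod.ext_iff] at h ⊢
  omega

/-- column n is fully circled -/
lemma circled_coln {n : ℕ} (hn : 1 ≤ n) : ∀ r, 1 ≤ r → r ≤ n → Circled n (r, n) := by
  induction n with
  | zero => omega
  | succ m ih =>
    intro r h1 h2
    rcases Nat.eq_or_lt_of_le h1 with rfl | hr
    · exact (circled_row1 hn).mpr ⟨hn, le_refl _⟩
    · have hm : 1 ≤ m := by
        by_contra h; push_neg at h
        interval_cases m <;> omega
      rw [circled_iff (by omega) hr]
      refine ⟨h2, by omega, le_refl _, ?_⟩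
      have : m + 1 - (m+1) + 1 = 1 := by omega
      rw [this]
      have : m + 1 - 1 = m := rfl
      rw [this]
      exact (circled_row1 hm).mpr ⟨by omega, by omega⟩

lemma circled_col1 {n r : ℕ} (h : Circled n (r, 1)) : r = 1 := by
  by_contra hr
  have h2 : 2 ≤ r := by rcases circled_bounds h with ⟨a,_,_,_⟩; omega
  have hn : 2 ≤ n := by rcases circled_bounds h with ⟨_,a,_,_⟩; omega
  rw [circled_iff hn h2] at h
  omega

noncomputable def Rcnt (n r : ℕ) : ℕ := ((Finset.Icc 1 n).filter (fun c => Circled n (r, c))).card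
noncomputable def Kcnt (n c : ℕ) : ℕ := ((Finset.Icc 1 n).filter (fun r => Circled n (r, c))).card

lemma Rcnt_one {n : ℕ} (hn : 1 ≤ n) : Rcnt n 1 = n := by
  rw [Rcnt]
  have : (Finset.Icc 1 n).filter (fun c => Circled n (1, c)) = Finset.Icc 1 n := by
    apply Finset.filter_true_of_mem
    intro c hc
    rw [Finset.mem_Icc] at hc
    exact (circled_row1 hn).mpr hc
  rw [this, Nat.card_Icc]; omega

lemma Rcnt_ge2 {n r : ℕ} (hn : 2 ≤ n) (hr : 2 ≤ r) (hrn : r ≤ n) :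
    Rcnt n r = Kcnt (n-1) (r-1) := by
  rw [Rcnt, Kcnt]
  apply Finset.card_bij (fun c _ => n - c + 1)
  · intro c hc
    simp only [Finset.mem_filter, Finset.mem_Icc] at hc ⊢
    obtain ⟨⟨h1, h2⟩, hC⟩ := hc
    rw [circled_iff hn hr] at hC
    exact ⟨⟨by omega, by omega⟩, hC.2.2.2⟩
  · intro a ha b hb hab
    simp only [Finset.mem_filter, Finset.mem_Icc] at ha hb
    omega
  · intro b hb
    simp only [Finset.mem_filter, Finset.mem_Icc] at hb
    obtain ⟨⟨h1, h2⟩, hC⟩ := hb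
    refine ⟨n - b + 1, ?_, by omega⟩
    simp only [Finset.mem_filter, Finset.mem_Icc]
    have he : n - (n - b + 1) + 1 = b := by omega
    refine ⟨⟨by omega, by omega⟩, ?_⟩
    rw [circled_iff hn hr, he]
    exact ⟨hrn, by omega, by omega, hC⟩

lemma Kcnt_one {n : ℕ} (hn : 1 ≤ n) : Kcnt n 1 = 1 := by
  rw [Kcnt]
  have : (Finset.Icc 1 n).filter (fun r => Circled n (r, 1)) = {1} := by
    ext r
    simp only [Finset.mem_filter, Finset.mem_Icc, Finset.mem_singleton]
    constructor
    · rintro ⟨_, h⟩; exact circled_col1 h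
    · rintro rfl; exact ⟨⟨le_refl _, hn⟩, (circled_row1 hn).mpr ⟨le_refl _, hn⟩⟩
  rw [this, Finset.card_singleton]

lemma Kcnt_ge2 {n c : ℕ} (hn : 2 ≤ n) (hc : 2 ≤ c) (hcn : c ≤ n) :
    Kcnt n c = Rcnt (n-1) (n - c + 1) + 1 := by
  rw [Kcnt, Rcnt]
  have hsplit : (Finset.Icc 1 n).filter (fun r => Circled n (r, c)) =
      insert 1 ((Finset.Icc 2 n).filter (fun r => Circled n (r, c))) := by
    ext r
    simp only [Finset.mem_filter, Finset.mem_Icc, Finset.mem_insert]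
    constructor
    · rintro ⟨⟨h1, h2⟩, hC⟩
      rcases Nat.eq_or_lt_of_le h1 with rfl | hr
      · exact Or.inl rfl
      · exact Or.inr ⟨⟨hr, h2⟩, hC⟩
    · rintro (rfl | ⟨⟨h1, h2⟩, hC⟩)
      · exact ⟨⟨le_refl _, by omega⟩, (circled_row1 (by omega)).mpr ⟨by omega, hcn⟩⟩
      · exact ⟨⟨by omega, h2⟩, hC⟩
  rw [hsplit, Finset.card_insert_of_notMem (by simp)]
  congr 1
  apply Finset.card_bij (fun r _ => r - 1)
  · intro r hr
    simp only [Finset.mem_filter, Finset.mem_Icc] at hr ⊢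
    obtain ⟨⟨h1, h2⟩, hC⟩ := hr
    rw [circled_iff hn h1] at hC
    exact ⟨⟨by omega, by omega⟩, hC.2.2.2⟩
  · intro a ha b hb hab
    simp only [Finset.mem_filter, Finset.mem_Icc] at ha hb
    omega
  · intro b hb
    simp only [Finset.mem_filter, Finset.mem_Icc] at hb
    obtain ⟨⟨h1, h2⟩, hC⟩ := hb
    refine ⟨b + 1, ?_, by omega⟩
    simp only [Finset.mem_filter, Finset.mem_Icc]
    refine ⟨⟨by omega, by omega⟩, ?_⟩
    rw [circled_iff hn (by omega)]
    have : b + 1 - 1 = b := by omega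
    rw [this]
    exact ⟨by omega, hc, hcn, hC⟩

lemma image_interval_1 {n : ℕ} : (Finset.Icc 2 n).image (fun r => r - 1) = Finset.Icc 1 (n-1) := by
  ext b
  simp only [Finset.mem_image, Finset.mem_Icc]
  constructor
  · rintro ⟨a, ⟨h1, h2⟩, rfl⟩; omega
  · rintro ⟨h1, h2⟩; exact ⟨b + 1, by omega, by omega⟩

lemma image_interval_2 {n : ℕ} : (Finset.Icc 2 n).image (fun c => n - c + 1) = Finset.Icc 1 (n-1) := by
  ext b
  simp only [Finset.mem_image, Finset.mem_Icc]
  constructor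
  · rintro ⟨a, ⟨h1, h2⟩, rfl⟩; omega
  · rintro ⟨h1, h2⟩; exact ⟨n - b + 1, by omega, by omega⟩

lemma image_interval_3 {m : ℕ} : (Finset.Icc 1 m).image (fun x => x + 1) = Finset.Icc 2 (m+1) := by
  ext b
  simp only [Finset.mem_image, Finset.mem_Icc]
  constructor
  · rintro ⟨a, ⟨h1, h2⟩, rfl⟩; omega
  · rintro ⟨h1, h2⟩; exact ⟨b - 1, by omega, by omega⟩

lemma image_interval_4 {n : ℕ} : (Finset.Icc 1 n).image (fun x => n + 1 - x) = Finset.Icc 1 n := by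
  ext b
  simp only [Finset.mem_image, Finset.mem_Icc]
  constructor
  · rintro ⟨a, ⟨h1, h2⟩, rfl⟩; omega
  · rintro ⟨h1, h2⟩; exact ⟨n + 1 - b, by omega, by omega⟩
def BijIcc (g : ℕ → ℕ) (n : ℕ) : Prop :=
  ((Finset.Icc 1 n).image g = Finset.Icc 1 n) ∧
  (∀ a ∈ Finset.Icc 1 n, ∀ b ∈ Finset.Icc 1 n, g a = g b → a = b)

lemma BijIcc.mem {g : ℕ → ℕ} {n : ℕ} (h : BijIcc g n) {x : ℕ} (hx : 1 ≤ x) (hx2 : x ≤ n) :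
    1 ≤ g x ∧ g x ≤ n := by
  have : g x ∈ Finset.Icc 1 n := by
    rw [← h.1]
    exact Finset.mem_image_of_mem g (Finset.mem_Icc.mpr ⟨hx, hx2⟩)
  rw [Finset.mem_Icc] at this
  exact this

lemma icc_split {n : ℕ} (hn : 1 ≤ n) : Finset.Icc 1 n = insert 1 (Finset.Icc 2 n) := by
  ext x
  simp only [Finset.mem_Icc, Finset.mem_insert]
  omega

lemma RKbij : ∀ n : ℕ, 1 ≤ n → BijIcc (Rcnt n) n ∧ BijIcc (Kcnt n) n := by
  intro n
  induction n with
  | zero => omega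
  | succ m ih =>
    intro _
    rcases Nat.eq_or_lt_of_le (Nat.one_le_iff_ne_zero.mpr (Nat.succ_ne_zero m)) with h1 | hm2
    · -- n = 1
      have hm : m = 0 := by omega
      subst hm
      have hR : Rcnt 1 1 = 1 := Rcnt_one (le_refl 1)
      have hK : Kcnt 1 1 = 1 := Kcnt_one (le_refl 1)
      constructor <;> constructor
      · simp [hR]
      · intro a ha b hb _; simp at ha hb; omega
      · simp [hK]
      · intro a ha b hb _; simp at ha hb; omega
    · -- n = m+1 ≥ 2
      set n := m + 1 with hn
      have hm1 : 1 ≤ m := by omega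
      obtain ⟨⟨hRim, hRinj⟩, ⟨hKim, hKinj⟩⟩ := ih hm1
      have hmn : n - 1 = m := by omega
      have hn2 : 2 ≤ n := by omega
      -- R part
      have hRimage2 : (Finset.Icc 2 n).image (Rcnt n) = Finset.Icc 1 m := by
        rw [show (Finset.Icc 2 n).image (Rcnt n) =
            (Finset.Icc 2 n).image (fun r => Kcnt m (r-1)) from
          Finset.image_congr (fun r hr => by
            simp only [Finset.coe_Icc, Set.mem_Icc] at hr
            rw [Rcnt_ge2 hn2 hr.1 hr.2, hmn])]
        rw [show (Finset.Icc 2 n).image (fun r => Kcnt m (r-1)) =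
            ((Finset.Icc 2 n).image (fun r => r - 1)).image (Kcnt m) from
          by rw [Finset.image_image]; rfl]
        rw [image_interval_1, hmn, hKim]
      have hRmem2 : ∀ r ∈ Finset.Icc 2 n, Rcnt n r ≤ m := by
        intro r hr
        have : Rcnt n r ∈ Finset.Icc 1 m := by
          rw [← hRimage2]; exact Finset.mem_image_of_mem _ hr
        rw [Finset.mem_Icc] at this; exact this.2
      have hRbij : BijIcc (Rcnt n) n := by
        constructor
        · rw [icc_split (by omega : 1 ≤ n), Finset.image_insert, Rcnt_one (by omega), hRimage2]
          ext x
          simp only [Finset.mem_insert, Finset.mem_Icc]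
          omega
        · intro a ha b hb hab
          rw [Finset.mem_Icc] at ha hb
          rcases Nat.eq_or_lt_of_le ha.1 with h1a | h2a <;>
            rcases Nat.eq_or_lt_of_le hb.1 with h1b | h2b
          · omega
          · exfalso
            rw [← h1a, Rcnt_one (by omega)] at hab
            have := hRmem2 b (Finset.mem_Icc.mpr ⟨h2b, hb.2⟩)
            omega
          · exfalso
            rw [← h1b, Rcnt_one (by omega)] at hab
            have := hRmem2 a (Finset.mem_Icc.mpr ⟨h2a, ha.2⟩)
            omega
          · rw [Rcnt_ge2 hn2 h2a ha.2, Rcnt_ge2 hn2 h2b hb.2, hmn] at hab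
            have := hKinj (a-1) (Finset.mem_Icc.mpr ⟨by omega, by omega⟩)
              (b-1) (Finset.mem_Icc.mpr ⟨by omega, by omega⟩) hab
            omega
      refine ⟨hRbij, ?_⟩
      -- K part
      have hKimage2 : (Finset.Icc 2 n).image (Kcnt n) = Finset.Icc 2 n := by
        rw [show (Finset.Icc 2 n).image (Kcnt n) =
            (Finset.Icc 2 n).image (fun c => Rcnt m (n - c + 1) + 1) from
          Finset.image_congr (fun c hc => by
            simp only [Finset.coe_Icc, Set.mem_Icc] at hc
            rw [Kcnt_ge2 hn2 hc.1 hc.2, hmn])]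
        have e2 : (((Finset.Icc 2 n).image (fun c => n - c + 1)).image (Rcnt m)).image (fun x => x + 1) =
            (Finset.Icc 2 n).image (fun c => Rcnt m (n - c + 1) + 1) := by
          rw [Finset.image_image, Finset.image_image]; rfl
        rw [← e2, image_interval_2, hmn, hRim, image_interval_3]
      have hKmem2 : ∀ c ∈ Finset.Icc 2 n, 2 ≤ Kcnt n c := by
        intro c hc
        have : Kcnt n c ∈ Finset.Icc 2 n := by
          rw [← hKimage2]; exact Finset.mem_image_of_mem _ hc
        rw [Finset.mem_Icc] at this; exact this.1
      constructor
      · rw [icc_split (by omega : 1 ≤ n), Finset.image_insert, Kcnt_one (by omega), hKimage2]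
      · intro a ha b hb hab
        rw [Finset.mem_Icc] at ha hb
        rcases Nat.eq_or_lt_of_le ha.1 with h1a | h2a <;>
          rcases Nat.eq_or_lt_of_le hb.1 with h1b | h2b
        · omega
        · exfalso
          rw [← h1a, Kcnt_one (by omega)] at hab
          have := hKmem2 b (Finset.mem_Icc.mpr ⟨h2b, hb.2⟩)
          omega
        · exfalso
          rw [← h1b, Kcnt_one (by omega)] at hab
          have := hKmem2 a (Finset.mem_Icc.mpr ⟨h2a, ha.2⟩)
          omega
        · rw [Kcnt_ge2 hn2 h2a ha.2, Kcnt_ge2 hn2 h2b hb.2, hmn] at hab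
          have := hRinj (n - a + 1) (Finset.mem_Icc.mpr ⟨by omega, by omega⟩)
            (n - b + 1) (Finset.mem_Icc.mpr ⟨by omega, by omega⟩) (by omega)
          omega
/-- A weak solution: values in `[1,n]`, injective along circled rows and columns,
and each circled entry counts its own value class among circled cells. -/
def WeakSol (n : ℕ) (f : ℕ × ℕ → ℕ) : Prop :=
  (∀ p, Circled n p → 1 ≤ f p ∧ f p ≤ n) ∧
  (∀ r c₁ c₂, Circled n (r, c₁) → Circled n (r, c₂) → c₁ ≠ c₂ → f (r, c₁) ≠ f (r, c₂)) ∧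
  (∀ r₁ r₂ c, Circled n (r₁, c) → Circled n (r₂, c) → r₁ ≠ r₂ → f (r₁, c) ≠ f (r₂, c)) ∧
  (∀ p, Circled n p → f p = Set.ncard {q | Circled n q ∧ f q = f p})

lemma valueClass_finite (n : ℕ) (f : ℕ × ℕ → ℕ) (v : ℕ) :
    {q : ℕ × ℕ | Circled n q ∧ f q = v}.Finite := by
  apply Set.Finite.subset ((Set.finite_Icc 1 n).prod (Set.finite_Icc 1 n))
  rintro ⟨r, c⟩ ⟨hC, _⟩
  obtain ⟨h1, h2, h3, h4⟩ := circled_bounds hC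
  exact ⟨Set.mem_Icc.mpr ⟨h1, h2⟩, Set.mem_Icc.mpr ⟨h3, h4⟩⟩

lemma row1_image {n : ℕ} {f : ℕ × ℕ → ℕ} (hw : WeakSol n f) (hn : 1 ≤ n) :
    (Finset.Icc 1 n).image (fun c => f (1, c)) = Finset.Icc 1 n := by
  apply Finset.eq_of_subset_of_card_le
  · intro x hx
    simp only [Finset.mem_image] at hx
    obtain ⟨c, hc, rfl⟩ := hx
    rw [Finset.mem_Icc] at hc ⊢
    exact hw.1 (1, c) ((circled_row1 hn).mpr hc)
  · rw [Finset.card_image_of_injOn]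
    intro a ha b hb hab
    simp only [Finset.coe_Icc, Set.mem_Icc] at ha hb
    by_contra hne
    exact hw.2.1 1 a b ((circled_row1 hn).mpr ha) ((circled_row1 hn).mpr hb) hne hab

lemma row1_exists {n : ℕ} {f : ℕ × ℕ → ℕ} (hw : WeakSol n f) (hn : 1 ≤ n) {v : ℕ}
    (hv1 : 1 ≤ v) (hv2 : v ≤ n) : ∃ c, 1 ≤ c ∧ c ≤ n ∧ f (1, c) = v := by
  have : v ∈ (Finset.Icc 1 n).image (fun c => f (1, c)) := by
    rw [row1_image hw hn]; exact Finset.mem_Icc.mpr ⟨hv1, hv2⟩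
  simp only [Finset.mem_image, Finset.mem_Icc] at this
  obtain ⟨c, ⟨h1, h2⟩, h3⟩ := this
  exact ⟨c, h1, h2, h3⟩

lemma count_eq {n : ℕ} {f : ℕ × ℕ → ℕ} (hw : WeakSol n f) (hn : 1 ≤ n) {v : ℕ}
    (hv1 : 1 ≤ v) (hv2 : v ≤ n) : Set.ncard {q : ℕ × ℕ | Circled n q ∧ f q = v} = v := by
  obtain ⟨c, h1, h2, h3⟩ := row1_exists hw hn hv1 hv2
  have hC : Circled n (1, c) := (circled_row1 hn).mpr ⟨h1, h2⟩
  have := hw.2.2.2 (1, c) hC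
  rw [h3] at this
  omega

lemma two_le_off_row1 {n : ℕ} {f : ℕ × ℕ → ℕ} (hn : 2 ≤ n) (hw : WeakSol n f)
    {p : ℕ × ℕ} (hp : Circled (n-1) p) : 2 ≤ f (rot n p) := by
  have hC : Circled n (rot n p) := rot_circled hn hp
  have hrange := hw.1 _ hC
  by_contra h
  have hv : f (rot n p) = 1 := by omega
  obtain ⟨c, h1, h2, h3⟩ := row1_exists hw (by omega) (le_refl 1) (by omega)
  have hcount : Set.ncard {q : ℕ × ℕ | Circled n q ∧ f q = 1} = 1 :=
    count_eq hw (by omega) (le_refl 1) (by omega)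
  have hne : (1, c) ≠ rot n p := by
    obtain ⟨b1, b2, b3, b4⟩ := circled_bounds hp
    intro he
    have h' := congrArg Prod.fst he
    simp [rot] at h'
    omega
  have h1lt : 1 < Set.ncard {q : ℕ × ℕ | Circled n q ∧ f q = 1} := by
    rw [Set.one_lt_ncard_iff (valueClass_finite n f 1)]
    exact ⟨(1, c), rot n p, ⟨(circled_row1 (by omega)).mpr ⟨h1, h2⟩, h3⟩, ⟨hC, hv⟩, hne⟩
  omega

lemma offrow_ncard {n : ℕ} {f : ℕ × ℕ → ℕ} (hn : 2 ≤ n) (hw : WeakSol n f) {v : ℕ}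
    (hv1 : 1 ≤ v) (hv2 : v ≤ n) :
    Set.ncard {q : ℕ × ℕ | Circled (n-1) q ∧ f (rot n q) = v} = v - 1 := by
  obtain ⟨c₀, h1, h2, h3⟩ := row1_exists hw (by omega) hv1 hv2
  set B := {q : ℕ × ℕ | Circled (n-1) q ∧ f (rot n q) = v} with hB
  have hBfin : B.Finite := by
    apply Set.Finite.subset ((Set.finite_Icc 1 n).prod (Set.finite_Icc 1 n))
    rintro ⟨r, c⟩ ⟨hC, _⟩
    obtain ⟨x1, x2, x3, x4⟩ := circled_bounds hC
    exact ⟨Set.mem_Icc.mpr ⟨x1, by omega⟩, Set.mem_Icc.mpr ⟨x3, by omega⟩⟩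
  have hsplit : {q : ℕ × ℕ | Circled n q ∧ f q = v} = insert (1, c₀) (rot n '' B) := by
    ext ⟨r, c⟩
    simp only [Set.mem_setOf_eq, Set.mem_insert_iff, Set.mem_image]
    constructor
    · rintro ⟨hC, hval⟩
      obtain ⟨x1, x2, x3, x4⟩ := circled_bounds hC
      rcases Nat.eq_or_lt_of_le x1 with hr1 | hr2
      · left
        have hr : r = 1 := by simpa using hr1.symm
        subst hr
        have : c = c₀ := by
          by_contra hne
          exact hw.2.1 1 c c₀ hC ((circled_row1 (by omega)).mpr ⟨h1, h2⟩) hne (by rw [hval, h3])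
        rw [this]
      · right
        obtain ⟨hin, heq⟩ := circled_eq_rot hn hr2 hC
        exact ⟨(n - c + 1, r - 1), ⟨hin, by rw [← heq]; exact hval⟩, heq.symm⟩
    · rintro (heq | ⟨p, ⟨hpC, hpv⟩, heq⟩)
      · rw [heq]
        exact ⟨(circled_row1 (by omega)).mpr ⟨h1, h2⟩, h3⟩
      · rw [← heq]
        exact ⟨rot_circled hn hpC, hpv⟩
  have hnotmem : (1, c₀) ∉ rot n '' B := by
    rintro ⟨p, ⟨hpC, _⟩, heq⟩
    obtain ⟨b1, _, _, _⟩ := circled_bounds hpC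
    have : (rot n p).1 = p.2 + 1 := rfl
    rw [heq] at this
    simp at this
    omega
  have hcnt : Set.ncard {q : ℕ × ℕ | Circled n q ∧ f q = v} = v := count_eq hw (by omega) hv1 hv2
  rw [hsplit, Set.ncard_insert_of_notMem hnotmem (hBfin.image _)] at hcnt
  rw [Set.ncard_image_of_injOn (fun a ha b hb hab => rot_injOn ha.1 hb.1 hab)] at hcnt
  omega

lemma descent {n : ℕ} {f : ℕ × ℕ → ℕ} (hn : 2 ≤ n) (hw : WeakSol n f) :
    WeakSol (n-1) (fun p => f (rot n p) - 1) := by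
  refine ⟨?_, ?_, ?_, ?_⟩
  · intro p hp
    have h2 := two_le_off_row1 hn hw hp
    have := (hw.1 _ (rot_circled hn hp)).2
    show 1 ≤ f (rot n p) - 1 ∧ f (rot n p) - 1 ≤ n - 1
    omega
  · intro r c₁ c₂ h1 h2 hne
    have g1 := rot_circled hn h1
    have g2 := rot_circled hn h2
    have hv1 := two_le_off_row1 hn hw h1
    have hv2 := two_le_off_row1 hn hw h2
    have : f (rot n (r, c₁)) ≠ f (rot n (r, c₂)) := by
      apply hw.2.2.1 (c₁ + 1) (c₂ + 1) (n + 1 - r) g1 g2 (by omega)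
    show f (rot n (r, c₁)) - 1 ≠ f (rot n (r, c₂)) - 1
    omega
  · intro r₁ r₂ c h1 h2 hne
    have g1 := rot_circled hn h1
    have g2 := rot_circled hn h2
    have hv1 := two_le_off_row1 hn hw h1
    have hv2 := two_le_off_row1 hn hw h2
    obtain ⟨x1, x2, _, _⟩ := circled_bounds h1
    obtain ⟨y1, y2, _, _⟩ := circled_bounds h2
    have : f (rot n (r₁, c)) ≠ f (rot n (r₂, c)) := by
      apply hw.2.1 (c + 1) (n + 1 - r₁) (n + 1 - r₂) g1 g2 (by omega)
    show f (rot n (r₁, c)) - 1 ≠ f (rot n (r₂, c)) - 1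
    omega
  · intro p hp
    have hv2 := two_le_off_row1 hn hw hp
    have hvn := (hw.1 _ (rot_circled hn hp)).2
    set v := f (rot n p) with hv
    have hset : {q : ℕ × ℕ | Circled (n-1) q ∧ f (rot n q) - 1 = v - 1} =
        {q : ℕ × ℕ | Circled (n-1) q ∧ f (rot n q) = v} := by
      ext q
      simp only [Set.mem_setOf_eq, and_congr_right_iff]
      intro hq
      have := two_le_off_row1 hn hw hq
      omega
    show f (rot n p) - 1 =
      Set.ncard {q : ℕ × ℕ | Circled (n-1) q ∧ f (rot n q) - 1 = v - 1}
    rw [hset, offrow_ncard hn hw (by omega) hvn]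
lemma sum_icc_le_sum_aux : ∀ (m : ℕ) (T : Finset ℕ), 0 ∉ T → T.card = m →
    ∑ x ∈ Finset.Icc 1 T.card, x ≤ ∑ x ∈ T, x := by
  intro m
  induction m with
  | zero => intro T hT hc; simp [Finset.card_eq_zero.mp hc]
  | succ m ih =>
    intro T hT hc
    have hne : T.Nonempty := by rw [← Finset.card_pos, hc]; omega
    obtain ⟨t, ht, htmax⟩ := T.exists_max_image id hne
    simp only [id_eq] at htmax
    have hsub : T ⊆ Finset.Icc 1 t := by
      intro x hx
      rw [Finset.mem_Icc]
      refine ⟨?_, htmax x hx⟩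
      by_contra h
      push_neg at h
      interval_cases x
      exact hT hx
    have hcard : T.card ≤ t := by
      have := Finset.card_le_card hsub
      rwa [Nat.card_Icc, Nat.add_sub_cancel] at this
    have herase_card : (T.erase t).card = m := by
      rw [Finset.card_erase_of_mem ht, hc]; omega
    have herase0 : 0 ∉ T.erase t := fun h => hT (Finset.mem_of_mem_erase h)
    have hih := ih (T.erase t) herase0 herase_card
    rw [herase_card] at hih
    rw [hc]
    have hsumT : ∑ x ∈ T, x = t + ∑ x ∈ T.erase t, x := (Finset.add_sum_erase T id ht).symm
    have hicc : ∑ x ∈ Finset.Icc 1 (m + 1), x = ∑ x ∈ Finset.Icc 1 m, x + (m + 1) := by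
      rw [← Finset.sum_Icc_succ_top (by omega : 1 ≤ m + 1)]
    rw [hicc, hsumT]
    have : m + 1 ≤ t := by omega
    omega

lemma sum_icc_le_sum (T : Finset ℕ) (hT : 0 ∉ T) :
    ∑ x ∈ Finset.Icc 1 T.card, x ≤ ∑ x ∈ T, x :=
  sum_icc_le_sum_aux T.card T hT rfl

lemma dom_upper (s : Finset ℕ) (φ ψ : ℕ → ℕ)
    (hφinj : ∀ a ∈ s, ∀ b ∈ s, φ a = φ b → a = b)
    (hφpos : ∀ a ∈ s, 1 ≤ φ a)
    (hψim : s.image ψ = Finset.Icc 1 s.card)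
    (hle : ∀ a ∈ s, φ a ≤ ψ a) :
    ∀ a ∈ s, φ a = ψ a := by
  have hψinj : Set.InjOn ψ ↑s := by
    rw [← Finset.card_image_iff, hψim, Nat.card_Icc, Nat.add_sub_cancel]
  have hψsum : ∑ a ∈ s, ψ a = ∑ x ∈ Finset.Icc 1 s.card, x := by
    rw [← hψim, Finset.sum_image (fun a ha b hb h => hψinj ha hb h)]
  have hφim_card : (s.image φ).card = s.card := by
    rw [Finset.card_image_of_injOn (fun a ha b hb h => hφinj a ha b hb h)]
  have hφ0 : 0 ∉ s.image φ := by
    simp only [Finset.mem_image, not_exists]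
    intro a ha
    rcases ha with ⟨ha, h0⟩
    have := hφpos a ha
    omega
  have hφsum : ∑ x ∈ Finset.Icc 1 s.card, x ≤ ∑ a ∈ s, φ a := by
    have := sum_icc_le_sum (s.image φ) hφ0
    rw [hφim_card] at this
    rwa [Finset.sum_image (fun a ha b hb h => hφinj a ha b hb h)] at this
  have hsum_le : ∑ a ∈ s, φ a ≤ ∑ a ∈ s, ψ a := Finset.sum_le_sum hle
  have heq : ∑ a ∈ s, φ a = ∑ a ∈ s, ψ a := by omega
  exact fun a ha => (Finset.sum_eq_sum_iff_of_le hle).mp heq a ha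

lemma dom_lower (s : Finset ℕ) (φ ψ : ℕ → ℕ)
    (hφinj : ∀ a ∈ s, ∀ b ∈ s, φ a = φ b → a = b)
    (hφmem : ∀ a ∈ s, 1 ≤ φ a ∧ φ a ≤ s.card)
    (hψim : s.image ψ = Finset.Icc 1 s.card)
    (hge : ∀ a ∈ s, ψ a ≤ φ a) :
    ∀ a ∈ s, φ a = ψ a := by
  have hψinj : Set.InjOn ψ ↑s := by
    rw [← Finset.card_image_iff, hψim, Nat.card_Icc, Nat.add_sub_cancel]
  have hψsum : ∑ a ∈ s, ψ a = ∑ x ∈ Finset.Icc 1 s.card, x := by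
    rw [← hψim, Finset.sum_image (fun a ha b hb h => hψinj ha hb h)]
  have hφim : s.image φ = Finset.Icc 1 s.card := by
    apply Finset.eq_of_subset_of_card_le
    · intro x hx
      simp only [Finset.mem_image] at hx
      obtain ⟨a, ha, rfl⟩ := hx
      exact Finset.mem_Icc.mpr (hφmem a ha)
    · rw [Nat.card_Icc, Nat.add_sub_cancel,
        Finset.card_image_of_injOn (fun a ha b hb h => hφinj a ha b hb h)]
  have hφsum : ∑ a ∈ s, φ a = ∑ x ∈ Finset.Icc 1 s.card, x := by
    rw [← hφim, Finset.sum_image (fun a ha b hb h => hφinj a ha b hb h)]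
  have heq : ∑ a ∈ s, ψ a = ∑ a ∈ s, φ a := by omega
  exact fun a ha => ((Finset.sum_eq_sum_iff_of_le hge).mp heq a ha).symm
lemma Kcnt_le {n c : ℕ} : Kcnt n c ≤ n := by
  have := Finset.card_filter_le (Finset.Icc 1 n) (fun r => Circled n (r, c))
  rw [Nat.card_Icc] at this
  rw [Kcnt]
  omega

lemma offrow_set_eq {n : ℕ} (f : ℕ × ℕ → ℕ) (hn : 2 ≤ n) (v : ℕ) :
    {q : ℕ × ℕ | Circled n q ∧ f q = v ∧ 2 ≤ q.1} =
      rot n '' {q : ℕ × ℕ | Circled (n-1) q ∧ f (rot n q) = v} := by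
  ext ⟨r, c⟩
  simp only [Set.mem_setOf_eq, Set.mem_image]
  constructor
  · rintro ⟨hC, hval, hr2⟩
    obtain ⟨hin, heq⟩ := circled_eq_rot hn hr2 hC
    exact ⟨(n - c + 1, r - 1), ⟨hin, by rw [← heq]; exact hval⟩, heq.symm⟩
  · rintro ⟨p, ⟨hpC, hpv⟩, heq⟩
    obtain ⟨b1, b2, b3, b4⟩ := circled_bounds hpC
    have h2 : (rot n p).1 = p.2 + 1 := rfl
    rw [heq] at h2
    refine ⟨by rw [← heq]; exact rot_circled hn hpC, by rw [← heq]; exact hpv, by simp at h2; omega⟩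

lemma offrow_ncard' {n : ℕ} {f : ℕ × ℕ → ℕ} (hn : 2 ≤ n) (hw : WeakSol n f) {v : ℕ}
    (hv1 : 1 ≤ v) (hv2 : v ≤ n) :
    Set.ncard {q : ℕ × ℕ | Circled n q ∧ f q = v ∧ 2 ≤ q.1} = v - 1 := by
  rw [offrow_set_eq f hn v,
    Set.ncard_image_of_injOn (fun a ha b hb hab => rot_injOn ha.1 hb.1 hab)]
  exact offrow_ncard hn hw hv1 hv2

lemma mainBound : ∀ n : ℕ, ∀ f : ℕ × ℕ → ℕ, WeakSol n f → ∀ r c, Circled n (r, c) →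
    (n + 1 - Rcnt n r ≤ f (r, c)) ∧ (n + 1 - Kcnt n c ≤ f (r, c)) := by
  intro n
  induction n using Nat.strong_induction_on with
  | _ n ih =>
  intro f hw r c hC
  obtain ⟨x1, x2, x3, x4⟩ := circled_bounds hC
  rcases le_or_gt n 1 with hn1 | hn2
  · have hn : n = 1 := by omega
    subst hn
    have hr : r = 1 := by omega
    have hc' : c = 1 := by omega
    subst hr; subst hc'
    have hf := (hw.1 _ hC).1
    have hR : Rcnt 1 1 = 1 := Rcnt_one (le_refl 1)
    have hK : Kcnt 1 1 = 1 := Kcnt_one (le_refl 1)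
    omega
  · -- n ≥ 2
    have hw' : WeakSol (n-1) (fun p => f (rot n p) - 1) := descent hn2 hw
    have ihb := ih (n-1) (by omega) _ hw'
    obtain ⟨⟨hRim, hRinj⟩, ⟨hKim, hKinj⟩⟩ := RKbij n (by omega)
    -- strict column bound for cells below row 1
    have hcol2 : ∀ r' c', Circled n (r', c') → 2 ≤ r' → n + 2 - Kcnt n c' ≤ f (r', c') := by
      intro r' c' hC' hr'
      have hcc := (circled_iff hn2 hr').mp hC'
      obtain ⟨hin, heq⟩ := circled_eq_rot hn2 hr' hC'
      have hb : (n-1) + 1 - Rcnt (n-1) (n - c' + 1) ≤ f (rot n (n - c' + 1, r' - 1)) - 1 :=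
        (ihb (n - c' + 1) (r' - 1) hin).1
      have hK : Kcnt n c' = Rcnt (n-1) (n - c' + 1) + 1 := Kcnt_ge2 hn2 hcc.2.1 hcc.2.2.1
      have hf : f (r', c') = f (rot n (n - c' + 1, r' - 1)) := by rw [← heq]
      have h2 := two_le_off_row1 hn2 hw hin
      rw [← hf] at hb h2
      omega
    -- row bound for cells below row 1
    have hrow2 : ∀ r' c', Circled n (r', c') → 2 ≤ r' → n + 1 - Rcnt n r' ≤ f (r', c') := by
      intro r' c' hC' hr'
      have hcc := (circled_iff hn2 hr').mp hC'
      obtain ⟨hin, heq⟩ := circled_eq_rot hn2 hr' hC'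
      have hb : (n-1) + 1 - Kcnt (n-1) (r' - 1) ≤ f (rot n (n - c' + 1, r' - 1)) - 1 :=
        (ihb (n - c' + 1) (r' - 1) hin).2
      have hR : Rcnt n r' = Kcnt (n-1) (r' - 1) := Rcnt_ge2 hn2 hr' hcc.1
      have hf : f (r', c') = f (rot n (n - c' + 1, r' - 1)) := by rw [← heq]
      have h2 := two_le_off_row1 hn2 hw hin
      rw [← hf] at hb h2
      omega
    -- upper bound on row-1 entries in terms of column counts
    have hub : ∀ c', 1 ≤ c' → c' ≤ n → Kcnt n c' + f (1, c') ≤ n + 1 := by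
      intro c' hc1 hc2
      set v := f (1, c') with hv
      have hCrow : Circled n (1, c') := (circled_row1 (by omega)).mpr ⟨hc1, hc2⟩
      have hrange := hw.1 _ hCrow
      set T := {q : ℕ × ℕ | Circled n q ∧ f q = v ∧ 2 ≤ q.1} with hT
      have hTcard : Set.ncard T = v - 1 := offrow_ncard' hn2 hw hrange.1 hrange.2
      have hTfin : T.Finite := by
        apply Set.Finite.subset (valueClass_finite n f v)
        rintro q ⟨a, b, _⟩; exact ⟨a, b⟩
      set D := ((Finset.Icc 1 n).filter (fun x => n + 2 - v ≤ Kcnt n x)).erase c' with hD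
      have hsnd : Set.InjOn Prod.snd T := by
        rintro ⟨a1, a2⟩ ⟨ha1, ha2, ha3⟩ ⟨b1, b2⟩ ⟨hb1, hb2, hb3⟩ hab
        simp only at hab
        subst hab
        by_contra hne
        have hne' : a1 ≠ b1 := fun h => hne (by rw [h])
        exact hw.2.2.1 a1 b1 a2 ha1 hb1 hne' (by rw [ha2, hb2])
      have hsub : Prod.snd '' T ⊆ ↑D := by
        rintro x ⟨⟨q1, q2⟩, ⟨hq1, hq2, hq3⟩, rfl⟩
        obtain ⟨y1, y2, y3, y4⟩ := circled_bounds hq1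
        have hKb := hcol2 q1 q2 hq1 hq3
        rw [hq2] at hKb
        have hKle : Kcnt n q2 ≤ n := Kcnt_le
        simp only [hD, Finset.coe_erase, Finset.coe_filter, Set.mem_diff,
          Set.mem_setOf_eq, Finset.mem_Icc, Set.mem_singleton_iff]
        refine ⟨⟨⟨y3, y4⟩, by omega⟩, ?_⟩
        intro hqc
        subst hqc
        exact hw.2.2.1 q1 1 q2 hq1 hCrow (by omega) (by rw [hq2])
      have hDcard : D.card ≤ (((Finset.Icc 1 n).filter (fun x => n + 2 - v ≤ Kcnt n x))).card - (if n + 2 - v ≤ Kcnt n c' then 1 else 0) := by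
        split_ifs with hsplit
        · have hmem : c' ∈ (Finset.Icc 1 n).filter (fun x => n + 2 - v ≤ Kcnt n x) :=
            Finset.mem_filter.mpr ⟨Finset.mem_Icc.mpr ⟨hc1, hc2⟩, hsplit⟩
          rw [hD, Finset.card_erase_of_mem hmem]
        · rw [hD]
          have := Finset.card_erase_le (s := (Finset.Icc 1 n).filter (fun x => n + 2 - v ≤ Kcnt n x)) (a := c')
          omega
      have hfiltcard : (((Finset.Icc 1 n).filter (fun x => n + 2 - v ≤ Kcnt n x))).card = v - 1 := by
        have himg : (((Finset.Icc 1 n).filter (fun x => n + 2 - v ≤ Kcnt n x))).image (Kcnt n) =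
            (Finset.Icc 1 n).filter (fun y => n + 2 - v ≤ y) := by
          rw [← Finset.filter_image, hKim]
        have := Finset.card_image_of_injOn (s := (Finset.Icc 1 n).filter (fun x => n + 2 - v ≤ Kcnt n x)) (f := Kcnt n)
          (fun a ha b hb hab => hKinj a (Finset.mem_filter.mp (Finset.mem_coe.mp ha)).1
            b (Finset.mem_filter.mp (Finset.mem_coe.mp hb)).1 hab)
        rw [himg] at this
        have hIcc : (Finset.Icc 1 n).filter (fun y => n + 2 - v ≤ y) = Finset.Icc (n + 2 - v) n := by
          ext y
          simp only [Finset.mem_filter, Finset.mem_Icc]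
          omega
        rw [hIcc, Nat.card_Icc] at this
        omega
      have hchain : v - 1 ≤ D.card := by
        have h1 : Set.ncard (Prod.snd '' T) = v - 1 := by
          rw [Set.ncard_image_of_injOn hsnd, hTcard]
        have h2 := Set.ncard_le_ncard hsub (Finset.finite_toSet D)
        rw [h1, Set.ncard_coe_finset] at h2
        exact h2
      by_contra hcon
      push_neg at hcon
      have hcmem : n + 2 - v ≤ Kcnt n c' := by omega
      rw [if_pos hcmem] at hDcard
      have hKle : Kcnt n c' ≤ n := Kcnt_le
      omega
    -- equality on row 1 via domination
    have hrow1K : ∀ c', 1 ≤ c' → c' ≤ n → f (1, c') = n + 1 - Kcnt n c' := by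
      have hψim : (Finset.Icc 1 n).image (fun x => n + 1 - Kcnt n x) = Finset.Icc 1 (Finset.Icc 1 n).card := by
        rw [Nat.card_Icc, Nat.add_sub_cancel]
        have e1 : ((Finset.Icc 1 n).image (Kcnt n)).image (fun x => n + 1 - x) =
            (Finset.Icc 1 n).image (fun x => n + 1 - Kcnt n x) := by
          rw [Finset.image_image]; rfl
        rw [← e1, hKim, image_interval_4]
      have := dom_upper (Finset.Icc 1 n) (fun c' => f (1, c')) (fun c' => n + 1 - Kcnt n c')
        (fun a ha b hb hab => by
          by_contra hne
          rw [Finset.mem_Icc] at ha hb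
          exact hw.2.1 1 a b ((circled_row1 (by omega)).mpr ha) ((circled_row1 (by omega)).mpr hb) hne hab)
        (fun a ha => (hw.1 _ ((circled_row1 (by omega)).mpr (Finset.mem_Icc.mp ha))).1)
        hψim
        (fun a ha => by
          have := hub a (Finset.mem_Icc.mp ha).1 (Finset.mem_Icc.mp ha).2
          show f (1, a) ≤ n + 1 - Kcnt n a
          omega)
      intro c' h1 h2
      exact this c' (Finset.mem_Icc.mpr ⟨h1, h2⟩)
    -- conclude
    rcases Nat.eq_or_lt_of_le x1 with hr1 | hr2
    · have hr : r = 1 := by omega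
      subst hr
      have hR : Rcnt n 1 = n := Rcnt_one (by omega)
      have hf := (hw.1 _ hC).1
      have hKv := hrow1K c x3 x4
      omega
    · have h1 := hrow2 r c hC hr2
      have h2 := hcol2 r c hC hr2
      omega

lemma Rcnt_le {n r : ℕ} : Rcnt n r ≤ n := by
  have := Finset.card_filter_le (Finset.Icc 1 n) (fun c => Circled n (r, c))
  rw [Nat.card_Icc] at this
  rw [Rcnt]
  omega

lemma image_interval_5 {n : ℕ} : (Finset.Icc 1 (n-1)).image (fun x => n - x) = Finset.Icc 1 (n-1) := by
  ext b
  simp only [Finset.mem_image, Finset.mem_Icc]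
  constructor
  · rintro ⟨a, ⟨h1, h2⟩, rfl⟩; omega
  · rintro ⟨h1, h2⟩; exact ⟨n - b, by omega, by omega⟩

lemma weak_of_pulsar {n : ℕ} {f : ℕ × ℕ → ℕ} (hf : IsPulsarSolution n f) : WeakSol n f := by
  obtain ⟨⟨hr, hrow, hcol⟩, hcnt⟩ := hf
  refine ⟨?_, ?_, ?_, hcnt⟩
  · rintro ⟨a, b⟩ hp
    obtain ⟨x1, x2, x3, x4⟩ := circled_bounds hp
    exact hr a b x1 x2 x3 x4
  · intro r c₁ c₂ h1 h2 hne
    obtain ⟨x1, x2, x3, x4⟩ := circled_bounds h1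
    obtain ⟨y1, y2, y3, y4⟩ := circled_bounds h2
    exact hrow r c₁ c₂ x1 x2 x3 x4 y3 y4 hne
  · intro r₁ r₂ c h1 h2 hne
    obtain ⟨x1, x2, x3, x4⟩ := circled_bounds h1
    obtain ⟨y1, y2, y3, y4⟩ := circled_bounds h2
    exact hcol r₁ r₂ c x1 x2 y1 y2 x3 x4 hne

/-- In any solution of the `n × n` Pulsar puzzle with `n ≥ 2`, below the top row the
last-column entry is one more than the first-column entry of the same row. -/
theorem pulsar_last_eq_first_add_one (n : ℕ) (hn : 2 ≤ n) (f : ℕ × ℕ → ℕ)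
    (hf : IsPulsarSolution n f) :
    ∀ j, 2 ≤ j → j ≤ n → f (j, n) = f (j, 1) + 1 := by
  intro j hj2 hjn
  have hw : WeakSol n f := weak_of_pulsar hf
  obtain ⟨⟨hlat, hlrow, hlcol⟩, _⟩ := hf
  obtain ⟨⟨hRim, hRinj⟩, ⟨hKim, hKinj⟩⟩ := RKbij n (by omega)
  have hMB := mainBound n f hw
  -- column n values
  have hcoln : ∀ i, 1 ≤ i → i ≤ n → f (i, n) = n + 1 - Rcnt n i := by
    have hψim : (Finset.Icc 1 n).image (fun i => n + 1 - Rcnt n i) =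
        Finset.Icc 1 (Finset.Icc 1 n).card := by
      rw [Nat.card_Icc, Nat.add_sub_cancel]
      have e1 : ((Finset.Icc 1 n).image (Rcnt n)).image (fun x => n + 1 - x) =
          (Finset.Icc 1 n).image (fun x => n + 1 - Rcnt n x) := by
        rw [Finset.image_image]; rfl
      rw [← e1, hRim, image_interval_4]
    have hcard : (Finset.Icc 1 n).card = n := by rw [Nat.card_Icc]; omega
    have := dom_lower (Finset.Icc 1 n) (fun i => f (i, n)) (fun i => n + 1 - Rcnt n i)
      (fun a ha b hb hab => by
        by_contra hne
        rw [Finset.mem_Icc] at ha hb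
        exact hlcol a b n ha.1 ha.2 hb.1 hb.2 (by omega) (by omega) hne hab)
      (fun a ha => by
        rw [Finset.mem_Icc] at ha
        have := hlat a n ha.1 ha.2 (by omega) (le_refl n)
        rw [hcard]
        exact this)
      hψim
      (fun a ha => by
        rw [Finset.mem_Icc] at ha
        have hCa : Circled n (a, n) := circled_coln (by omega) a ha.1 ha.2
        exact (hMB a n hCa).1)
    intro i h1 h2
    exact this i (Finset.mem_Icc.mpr ⟨h1, h2⟩)
  -- first-column upper bound
  have hfc_ub : ∀ i, 2 ≤ i → i ≤ n → f (i, 1) ≤ n - Rcnt n i := by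
    intro i h2 hin
    have hRpos : 1 ≤ Rcnt n i := by
      rw [Rcnt]
      apply Finset.card_pos.mpr
      exact ⟨n, Finset.mem_filter.mpr ⟨Finset.mem_Icc.mpr ⟨by omega, le_refl n⟩,
        circled_coln (by omega) i (by omega) hin⟩⟩
    have hRle : Rcnt n i ≤ n := Rcnt_le
    -- the circled values in row i are exactly Icc (n+1-Rcnt n i) n
    have himg : ((Finset.Icc 1 n).filter (fun c => Circled n (i, c))).image (fun c => f (i, c)) =
        Finset.Icc (n + 1 - Rcnt n i) n := by
      apply Finset.eq_of_subset_of_card_le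
      · intro x hx
        simp only [Finset.mem_image, Finset.mem_filter, Finset.mem_Icc] at hx ⊢
        obtain ⟨c, ⟨⟨hc1, hc2⟩, hcC⟩, rfl⟩ := hx
        exact ⟨(hMB i c hcC).1, (hw.1 _ hcC).2⟩
      · rw [Nat.card_Icc, Finset.card_image_of_injOn, Rcnt]
        · omega
        · intro a ha b hb hab
          simp only [Finset.coe_filter, Set.mem_setOf_eq, Finset.mem_Icc] at ha hb
          by_contra hne
          exact hw.2.1 i a b ha.2 hb.2 hne hab
    by_contra hcon
    push_neg at hcon
    have hmem : f (i, 1) ∈ Finset.Icc (n + 1 - Rcnt n i) n := by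
      rw [Finset.mem_Icc]
      have := hlat i 1 (by omega) hin (le_refl 1) (by omega)
      omega
    rw [← himg] at hmem
    simp only [Finset.mem_image, Finset.mem_filter, Finset.mem_Icc] at hmem
    obtain ⟨c, ⟨⟨hc1, hc2⟩, hcC⟩, hceq⟩ := hmem
    have hcne : c ≠ 1 := by
      intro h
      rw [h] at hcC
      have := circled_col1 hcC
      omega
    exact hlrow i c 1 (by omega) hin hc1 hc2 (le_refl 1) (by omega) hcne hceq
  -- first-column equality via domination
  have hfc : ∀ i, 2 ≤ i → i ≤ n → f (i, 1) = n - Rcnt n i := by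
    have hcard2 : (Finset.Icc 2 n).card = n - 1 := by rw [Nat.card_Icc]; omega
    have hR2img : (Finset.Icc 2 n).image (Rcnt n) = Finset.Icc 1 (n - 1) := by
      apply Finset.eq_of_subset_of_card_le
      · intro x hx
        simp only [Finset.mem_image, Finset.mem_Icc] at hx ⊢
        obtain ⟨a, ⟨ha1, ha2⟩, rfl⟩ := hx
        have hmem : Rcnt n a ∈ Finset.Icc 1 n := by
          rw [← hRim]
          exact Finset.mem_image_of_mem _ (Finset.mem_Icc.mpr ⟨by omega, ha2⟩)
        rw [Finset.mem_Icc] at hmem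
        have hne : Rcnt n a ≠ n := by
          intro h
          have h1n : Rcnt n 1 = n := Rcnt_one (by omega)
          have := hRinj a (Finset.mem_Icc.mpr ⟨by omega, ha2⟩) 1
            (Finset.mem_Icc.mpr ⟨le_refl 1, by omega⟩) (by omega)
          omega
        omega
      · have hinj : Set.InjOn (Rcnt n) ↑(Finset.Icc 2 n) := by
          intro a ha b hb hab
          simp only [Finset.coe_Icc, Set.mem_Icc] at ha hb
          exact hRinj a (Finset.mem_Icc.mpr ⟨by omega, ha.2⟩) b
            (Finset.mem_Icc.mpr ⟨by omega, hb.2⟩) hab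
        rw [Nat.card_Icc, Finset.card_image_of_injOn hinj, hcard2]
        omega
    have hψim : (Finset.Icc 2 n).image (fun i => n - Rcnt n i) =
        Finset.Icc 1 (Finset.Icc 2 n).card := by
      rw [hcard2]
      have e1 : ((Finset.Icc 2 n).image (Rcnt n)).image (fun x => n - x) =
          (Finset.Icc 2 n).image (fun x => n - Rcnt n x) := by
        rw [Finset.image_image]; rfl
      rw [← e1, hR2img, image_interval_5]
    have := dom_upper (Finset.Icc 2 n) (fun i => f (i, 1)) (fun i => n - Rcnt n i)
      (fun a ha b hb hab => by
        by_contra hne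
        rw [Finset.mem_Icc] at ha hb
        exact hlcol a b 1 (by omega) ha.2 (by omega) hb.2 (le_refl 1) (by omega) hne hab)
      (fun a ha => by
        rw [Finset.mem_Icc] at ha
        exact (hlat a 1 (by omega) ha.2 (le_refl 1) (by omega)).1)
      hψim
      (fun a ha => by
        rw [Finset.mem_Icc] at ha
        show f (a, 1) ≤ n - Rcnt n a
        exact hfc_ub a ha.1 ha.2)
    intro i h1 h2
    exact this i (Finset.mem_Icc.mpr ⟨h1, h2⟩)
  -- conclude
  have h1 := hcoln j (by omega) hjn
  have h2 := hfc j hj2 hjn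
  have hRpos : 1 ≤ Rcnt n j := by
    rw [Rcnt]
    apply Finset.card_pos.mpr
    exact ⟨n, Finset.mem_filter.mpr ⟨Finset.mem_Icc.mpr ⟨by omega, le_refl n⟩,
      circled_coln (by omega) j (by omega) hjn⟩⟩
  have hRn : Rcnt n j ≠ n := by
    intro h
    have h1n : Rcnt n 1 = n := Rcnt_one (by omega)
    have := hRinj j (Finset.mem_Icc.mpr ⟨by omega, hjn⟩) 1
      (Finset.mem_Icc.mpr ⟨le_refl 1, by omega⟩) (by omega)
    omega
  have hRle : Rcnt n j ≤ n := Rcnt_le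
  omega
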